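/- (Steingrímsson) In the ring of formal power series ℤ⟦t⟧, the identity (Σ_{j≥0} (r·j + 1)^n · t^j) · (1 − t)^{n+1} = Σ_{π ∈ G_{r,n}} t^{des(π)} holds; equivalently, Σ_{j≥0} (rj+1)^n t^j = (Σ_{π ∈ G_{r,n}} t^{des(π)}) / (1−t)^{n+1}. -/

import Mathlib

open scoped BigOperators

/-- Lexicographic (color-first) strict order on colored letters `(value, color)`. -/
def letterLT (x y : ℕ × ℕ) : Prop :=
  x.2 < y.2 ∨ (x.2 = y.2 ∧ x.1 < y.1)

instance : DecidableRel letterLT := fun x y => by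
  unfold letterLT; infer_instance

/-- The colored permutation group `G_{r,n}`. -/
@[ext] structure ColoredPerm (r n : ℕ) where
  perm : Equiv.Perm (Fin n)
  col : Fin n → ZMod r

namespace ColoredPerm

variable {r n : ℕ}

instance : Mul (ColoredPerm r n) :=
  ⟨fun a b => ⟨a.perm * b.perm, fun i => a.col (b.perm i) + b.col i⟩⟩

instance : One (ColoredPerm r n) :=
  ⟨⟨1, fun _ => 0⟩⟩

instance : Inv (ColoredPerm r n) :=
  ⟨fun a => ⟨a.perm⁻¹, fun i => -a.col (a.perm⁻¹ i)⟩⟩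

instance : Group (ColoredPerm r n) where
  mul_assoc a b c := by
    refine ColoredPerm.ext (mul_assoc _ _ _) ?_
    funext i
    show a.col (b.perm (c.perm i)) + b.col (c.perm i) + c.col i
        = a.col ((b.perm * c.perm) i) + (b.col (c.perm i) + c.col i)
    rw [Equiv.Perm.mul_apply, add_assoc]
  one_mul a := by
    refine ColoredPerm.ext (one_mul _) ?_
    funext i
    show (0 : ZMod r) + a.col i = a.col i
    rw [zero_add]
  mul_one a := by
    refine ColoredPerm.ext (mul_one _) ?_
    funext i
    show a.col ((1 : Equiv.Perm (Fin n)) i) + 0 = a.col i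
    simp
  inv_mul_cancel a := by
    refine ColoredPerm.ext (inv_mul_cancel _) ?_
    funext i
    show -a.col (a.perm⁻¹ (a.perm i)) + a.col i = 0
    simp

/-- `ColoredPerm r n` is equivalent (as a type) to a product. -/
def toProd : ColoredPerm r n ≃ Equiv.Perm (Fin n) × (Fin n → ZMod r) where
  toFun a := (a.perm, a.col)
  invFun p := ⟨p.1, p.2⟩
  left_inv _ := rfl
  right_inv _ := rfl

instance [NeZero r] : Fintype (ColoredPerm r n) := Fintype.ofEquiv _ toProd.symm

instance : DecidableEq (ColoredPerm r n) := toProd.decidableEq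

/-- The `i`-th letter of the one-line notation (0-indexed), as a pair (value, color);
for `i = n` this is the sentinel letter `0₁`. Values are in `{1, …, n}`. -/
def letterAt (a : ColoredPerm r n) (i : ℕ) : ℕ × ℕ :=
  if h : i < n then ((a.perm ⟨i, h⟩ : ℕ) + 1, (a.col ⟨i, h⟩).val) else (0, 1)

/-- The descent set of a colored permutation (positions 0-indexed: position `i`
corresponds to the paper's `i+1 ∈ {1, …, n}`). -/
def Des (a : ColoredPerm r n) : Finset (Fin n) :=
  Finset.univ.filter fun i : Fin n => letterLT (letterAt a (i.1 + 1)) (letterAt a i.1)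

/-- The descent number. -/
def des (a : ColoredPerm r n) : ℕ := (Des a).card

/-- The internal descent number `|Des(π) ∩ {1, …, n−1}|`. -/
def intdes (a : ColoredPerm r n) : ℕ :=
  ((Des a).filter fun i : Fin n => i.1 + 1 < n).card

end ColoredPerm

open ColoredPerm

/-!
For each `j`, the words `f : [n] → {0, …, rj}` are in bijection with the pairs `(π, λ)` where
`π ∈ G_{r,n}` and `λ` is compatible with `π`: `j ≥ λ_1 ≥ ⋯ ≥ λ_n ≥ λ_{n+1} = 0`, with
`λ_i > λ_{i+1}` whenever `i ∈ Des(π)`. The permutation lists the positions of `f` by decreasing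
value (ties by increasing position), and writing the value read at step `i` as `r λ_i - c_i` with
`0 ≤ c_i < r` gives the colour `c_i` and `λ_i`; the colour-first order on letters is exactly what
makes the compatibility conditions match this sorting. Adding to `λ_i` the number of non-descents
at positions `≥ i` turns compatible sequences into strictly decreasing sequences in
`{1, …, n + j - des π}`, so `(rj + 1)^n = ∑_π C(n + j - des π, n)`, and
`∑_j C(n + j - d, n) t^j = t^d / (1 - t)^{n+1}`.
-/

open Finset

theorem Fin.rel_of_lt_of_rel_add_one {α : Type*} {n : ℕ} (rel : α → α → Prop) [IsTrans α rel]
    {v : Fin n → α} (h : ∀ (i : Fin n) (hi : i.1 + 1 < n), rel (v i) (v ⟨i.1 + 1, hi⟩))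
    {i k : Fin n} (hik : i < k) : rel (v i) (v k) := by
  cases n with
  | zero => exact i.elim0
  | succ m => exact (Fin.liftFun_iff_succ rel).2 (fun i => h i.castSucc (by simp)) hik

theorem card_strictAnti_piFinset {α : Type*} [LinearOrder α] (s : Finset α) (k : ℕ) :
    #{v ∈ Fintype.piFinset fun _ : Fin k => s | StrictAnti v} = (#s).choose k := by
  rw [← card_powersetCard]
  refine card_bij (fun v _ => univ.image v) (fun v hv => ?_) (fun v hv w hw hvw => ?_)
    (fun t ht => ?_)
  · obtain ⟨hvs, hv⟩ := mem_filter.1 hv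
    refine mem_powersetCard.2 ⟨fun x hx => ?_, ?_⟩
    · obtain ⟨i, -, rfl⟩ := mem_image.1 hx
      exact Fintype.mem_piFinset.1 hvs i
    · rw [card_image_of_injective _ hv.injective, card_univ, Fintype.card_fin]
  · have hrange : Set.range v = Set.range w := by
      simpa only [coe_image, coe_univ, Set.image_univ] using congrArg ((↑) : Finset α → Set α) hvw
    exact ((mem_filter.1 hv).2.range_inj (mem_filter.1 hw).2).1 hrange
  · obtain ⟨hts, htk⟩ := mem_powersetCard.1 ht
    refine ⟨t.orderEmbOfFin htk ∘ Fin.rev, mem_filter.2 ⟨Fintype.mem_piFinset.2 fun i =>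
      hts (t.orderEmbOfFin_mem htk _), (t.orderEmbOfFin htk).strictMono.comp_strictAnti
        Fin.rev_strictAnti⟩, ?_⟩
    rw [← image_image, image_univ_of_surjective Fin.rev_surjective, image_orderEmbOfFin_univ]

theorem Nat.le_iff_le_mul_of_mul_eq_add {r l w s : ℕ} (hs : s < r) (h : r * l = w + s) (j : ℕ) :
    l ≤ j ↔ w ≤ r * j := by
  constructor
  · intro hl
    have := Nat.mul_le_mul_left r hl
    omega
  · intro hw
    rw [← Nat.lt_succ_iff, ← Nat.mul_lt_mul_left ((Nat.zero_le s).trans_lt hs), Nat.mul_succ]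
    omega

theorem PowerSeries.mk_choose_sub_mul_one_sub_pow (R : Type*) [CommRing R] {n d : ℕ}
    (hd : d ≤ n) : (mk fun j => ((n + j - d).choose n : R)) * (1 - X) ^ (n + 1) = X ^ d := by
  have hshift : (mk fun j => ((n + j - d).choose n : R)) =
      X ^ d * mk fun j => ((n + j).choose n : R) := by
    ext k
    rw [coeff_X_pow_mul', coeff_mk, coeff_mk]
    split_ifs with h
    · congr 2
      omega
    · rw [Nat.choose_eq_zero_of_lt (by omega), Nat.cast_zero]
  rw [hshift, mul_assoc, mk_add_choose_mul_one_sub_pow_eq_one, mul_one]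

section CompatibleSeqs

variable {n : ℕ}

def nextOrZero (v : Fin n → ℕ) (i : Fin n) : ℕ :=
  if h : i.1 + 1 < n then v ⟨i.1 + 1, h⟩ else 0

theorem nextOrZero_of_lt (v : Fin n → ℕ) {i : Fin n} (h : i.1 + 1 < n) :
    nextOrZero v i = v ⟨i.1 + 1, h⟩ :=
  dif_pos h

theorem nextOrZero_of_eq (v : Fin n → ℕ) {i : Fin n} (h : i.1 + 1 = n) : nextOrZero v i = 0 :=
  dif_neg (by omega)

theorem nextOrZero_mono {v w : Fin n → ℕ} (h : v ≤ w) (i : Fin n) :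
    nextOrZero v i ≤ nextOrZero w i := by
  unfold nextOrZero
  split_ifs
  exacts [h _, le_rfl]

theorem nextOrZero_add (v w : Fin n → ℕ) (i : Fin n) :
    nextOrZero (v + w) i = nextOrZero v i + nextOrZero w i := by
  unfold nextOrZero
  split_ifs <;> rfl

theorem nextOrZero_sub (v w : Fin n → ℕ) (i : Fin n) :
    nextOrZero (v - w) i = nextOrZero v i - nextOrZero w i := by
  unfold nextOrZero
  split_ifs <;> rfl

theorem antitone_of_nextOrZero_le {v : Fin n → ℕ} (h : ∀ i, nextOrZero v i ≤ v i) :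
    Antitone v :=
  antitone_iff_forall_lt.2 fun _ _ =>
    Fin.rel_of_lt_of_rel_add_one (· ≥ ·) fun i hi => (nextOrZero_of_lt v hi ▸ h i)

theorem forall_nextOrZero_lt_iff {v : Fin n → ℕ} :
    (∀ i, nextOrZero v i < v i) ↔ StrictAnti v ∧ ∀ i, 0 < v i := by
  refine ⟨fun h => ⟨fun _ _ => Fin.rel_of_lt_of_rel_add_one (· > ·) fun i hi =>
    nextOrZero_of_lt v hi ▸ h i, fun i => (Nat.zero_le _).trans_lt (h i)⟩, fun ⟨hv, hpos⟩ i => ?_⟩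
  unfold nextOrZero
  split_ifs
  exacts [hv (Fin.mk_lt_mk.2 (Nat.lt_succ_self _)), hpos i]

theorem StrictAnti.card_Ici_le {v : Fin n → ℕ} (hv : StrictAnti v) (hpos : ∀ i, 0 < v i)
    (i : Fin n) : #(Ici i) ≤ v i := by
  calc #(Ici i) ≤ #(Icc 1 (v i)) :=
        card_le_card_of_injOn v (fun k hk => mem_Icc.2
          ⟨hpos k, hv.antitone (mem_Ici.1 hk)⟩) hv.injective.injOn
    _ = v i := by simp

/-- The paper's `j ≥ λ_1 ≥ ⋯ ≥ λ_n ≥ λ_{n+1} = 0`, strict at the positions in `D`. -/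
def IsCompatible (D : Finset (Fin n)) (j : ℕ) (l : Fin n → ℕ) : Prop :=
  (∀ i, l i ≤ j) ∧ ∀ i, nextOrZero l i + (if i ∈ D then 1 else 0) ≤ l i

instance (D : Finset (Fin n)) (j : ℕ) : DecidablePred (IsCompatible D j) :=
  fun _ => inferInstanceAs (Decidable (_ ∧ _))

def compatibleSeqs (D : Finset (Fin n)) (j : ℕ) : Finset (Fin n → ℕ) :=
  {l ∈ Fintype.piFinset fun _ => range (j + 1) | IsCompatible D j l}

theorem mem_compatibleSeqs {D : Finset (Fin n)} {j : ℕ} {l : Fin n → ℕ} :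
    l ∈ compatibleSeqs D j ↔ IsCompatible D j l := by
  refine ⟨fun h => (mem_filter.1 h).2, fun h => mem_filter.2 ⟨?_, h⟩⟩
  exact Fintype.mem_piFinset.2 fun i => mem_range.2 (Nat.lt_succ_of_le (h.1 i))

def nonDesFrom (D : Finset (Fin n)) (i : Fin n) : ℕ := #(Ici i \ D)

theorem nonDesFrom_eq (D : Finset (Fin n)) (i : Fin n) :
    nonDesFrom D i = nextOrZero (nonDesFrom D) i + if i ∈ D then 0 else 1 := by
  have hIoi : #(Ioi i \ D) = nextOrZero (nonDesFrom D) i := by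
    unfold nextOrZero nonDesFrom
    split_ifs with h
    · congr 2
      ext k
      simp only [mem_Ioi, mem_Ici, Fin.lt_def, Fin.le_def]
      omega
    · rw [card_eq_zero, sdiff_eq_empty_iff_subset]
      intro k hk
      have := mem_Ioi.1 hk
      omega
  rw [nonDesFrom, ← Ioi_insert, ← hIoi]
  split_ifs with hi
  · rw [insert_sdiff_of_mem _ hi, add_zero]
  · rw [insert_sdiff_of_notMem _ hi, card_insert_of_notMem (by simp)]

theorem nonDesFrom_add_card_le (D : Finset (Fin n)) (i : Fin n) : nonDesFrom D i + #D ≤ n := by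
  calc nonDesFrom D i + #D ≤ #(univ \ D) + #D :=
        Nat.add_le_add_right (card_le_card (sdiff_subset_sdiff (subset_univ _) le_rfl)) _
    _ = n := by rw [card_sdiff_add_card_eq_card (subset_univ D), card_univ, Fintype.card_fin]

theorem nonDesFrom_zero_add_card (D : Finset (Fin n)) (h : 0 < n) :
    nonDesFrom D ⟨0, h⟩ + #D = n := by
  rw [nonDesFrom, show Ici (⟨0, h⟩ : Fin n) = univ by ext; simp [Fin.le_def],
    card_sdiff_add_card_eq_card (subset_univ D), card_univ, Fintype.card_fin]

theorem nonDesFrom_le_of_strictAnti (D : Finset (Fin n)) {v : Fin n → ℕ} (hv : StrictAnti v)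
    (hpos : ∀ i, 0 < v i) : nonDesFrom D ≤ v :=
  fun i => (card_le_card sdiff_subset).trans (hv.card_Ici_le hpos i)

theorem IsCompatible.add_nonDesFrom {D : Finset (Fin n)} {j : ℕ} {l : Fin n → ℕ}
    (hl : IsCompatible D j l) :
    StrictAnti (l + nonDesFrom D) ∧ ∀ i, (l + nonDesFrom D) i ∈ Icc 1 (n + j - #D) := by
  have hlt : ∀ i, nextOrZero (l + nonDesFrom D) i < (l + nonDesFrom D) i := by
    intro i
    have h1 := hl.2 i
    have h2 := nonDesFrom_eq D i
    rw [nextOrZero_add, Pi.add_apply]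
    split_ifs at h1 h2 <;> omega
  obtain ⟨hanti, hpos⟩ := forall_nextOrZero_lt_iff.1 hlt
  refine ⟨hanti, fun i => mem_Icc.2 ⟨hpos i, ?_⟩⟩
  have := hl.1 i
  have := nonDesFrom_add_card_le D i
  rw [Pi.add_apply]
  omega

theorem isCompatible_sub_nonDesFrom (D : Finset (Fin n)) {j : ℕ} {v : Fin n → ℕ}
    (hv : StrictAnti v) (hmem : ∀ i, v i ∈ Icc 1 (n + j - #D)) :
    IsCompatible D j (v - nonDesFrom D) := by
  have hIcc := fun i => mem_Icc.1 (hmem i)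
  have hle := nonDesFrom_le_of_strictAnti D hv fun i => (hIcc i).1
  have hlt := forall_nextOrZero_lt_iff.2 ⟨hv, fun i => (hIcc i).1⟩
  have hstep : ∀ i, nextOrZero (v - nonDesFrom D) i + (if i ∈ D then 1 else 0) ≤
      (v - nonDesFrom D) i := by
    intro i
    have := hlt i
    have := nonDesFrom_eq D i
    have := nextOrZero_mono hle i
    have := hle i
    rw [nextOrZero_sub, Pi.sub_apply]
    split_ifs at * <;> omega
  refine ⟨fun i => ?_, hstep⟩
  have hn : 0 < n := i.pos
  calc (v - nonDesFrom D) i ≤ (v - nonDesFrom D) ⟨0, hn⟩ :=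
        antitone_of_nextOrZero_le (fun k => (Nat.le_add_right _ _).trans (hstep k))
          (Fin.le_iff_val_le_val.2 (Nat.zero_le _))
    _ ≤ j := by
        have := nonDesFrom_zero_add_card D hn
        have := hIcc ⟨0, hn⟩
        rw [Pi.sub_apply]
        omega

theorem card_compatibleSeqs (D : Finset (Fin n)) (j : ℕ) :
    #(compatibleSeqs D j) = (n + j - #D).choose n := by
  have hM : #(Icc 1 (n + j - #D)) = n + j - #D := by simp
  rw [← hM, ← card_strictAnti_piFinset]
  refine card_nbij' (· + nonDesFrom D) (· - nonDesFrom D) (fun l hl => ?_) (fun v hv => ?_)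
    (fun l _ => add_tsub_cancel_right l (nonDesFrom D)) (fun v hv => ?_)
  · obtain ⟨hanti, hmem⟩ := (mem_compatibleSeqs.1 hl).add_nonDesFrom
    exact mem_filter.2 ⟨Fintype.mem_piFinset.2 hmem, hanti⟩
  · obtain ⟨hvs, hanti⟩ := mem_filter.1 hv
    exact mem_compatibleSeqs.2 (isCompatible_sub_nonDesFrom D hanti (Fintype.mem_piFinset.1 hvs))
  · obtain ⟨hvs, hanti⟩ := mem_filter.1 hv
    exact tsub_add_cancel_of_le (nonDesFrom_le_of_strictAnti D hanti fun i =>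
      (mem_Icc.1 (Fintype.mem_piFinset.1 hvs i)).1)

end CompatibleSeqs

namespace ColoredPerm

variable {r n : ℕ}

theorem mem_Des_of_lt (a : ColoredPerm r n) {i : Fin n} (h : i.1 + 1 < n) :
    i ∈ Des a ↔ (a.col ⟨i.1 + 1, h⟩).val < (a.col i).val ∨
      (a.col ⟨i.1 + 1, h⟩).val = (a.col i).val ∧ a.perm ⟨i.1 + 1, h⟩ < a.perm i := by
  simp only [Des, mem_filter, mem_univ, true_and, letterAt, dif_pos h, dif_pos i.isLt, letterLT,
    Fin.eta, Fin.lt_def, Nat.add_lt_add_iff_right]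

theorem mem_Des_of_eq (a : ColoredPerm r n) {i : Fin n} (h : i.1 + 1 = n) :
    i ∈ Des a ↔ a.col i ≠ 0 := by
  simp only [Des, mem_filter, mem_univ, true_and, letterAt,
    dif_neg (show ¬ i.1 + 1 < n by omega), dif_pos i.isLt, letterLT, Fin.eta, ne_eq,
    ← ZMod.val_eq_zero]
  omega

theorem des_le (a : ColoredPerm r n) : des a ≤ n :=
  (card_le_univ _).trans_eq (Fintype.card_fin n)

/-- If `λ_i = 0` then `λ` vanishes and has no descents from `i` on, so the colours weakly
increase from position `i` to the last one, which is `0`. -/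
theorem IsCompatible.col_eq_zero {a : ColoredPerm r n} {j : ℕ} {l : Fin n → ℕ}
    (hc : IsCompatible (Des a) j l) {i : Fin n} (hl : l i = 0) : a.col i = 0 := by
  suffices ∀ k (i : Fin n), i.1 + k + 1 = n → l i = 0 → a.col i = 0 from
    this (n - i.1 - 1) i (by have := i.isLt; omega) hl
  intro k
  induction k with
  | zero =>
    intro i hi hl
    have := hc.2 i
    rw [nextOrZero_of_eq l hi, hl] at this
    split_ifs at this with hd
    · omega
    · exact not_not.1 ((mem_Des_of_eq a hi).not.1 hd)
  | succ k ih =>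
    intro i hi hl
    have hi' : i.1 + 1 < n := by omega
    have := hc.2 i
    rw [nextOrZero_of_lt l hi', hl] at this
    split_ifs at this with hd
    · omega
    · have hnext := ih ⟨i.1 + 1, hi'⟩ (by simp only; omega) (by omega)
      rw [mem_Des_of_lt a hi', hnext, ZMod.val_zero] at hd
      rw [← ZMod.val_eq_zero]
      omega

theorem IsCompatible.col_val_le_mul [NeZero r] {a : ColoredPerm r n} {j : ℕ} {l : Fin n → ℕ}
    (hc : IsCompatible (Des a) j l) (i : Fin n) : (a.col i).val ≤ r * l i := by
  rcases Nat.eq_zero_or_pos (l i) with h0 | hpos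
  · rw [hc.col_eq_zero h0, ZMod.val_zero]
    exact Nat.zero_le _
  · exact (ZMod.val_lt _).le.trans (Nat.le_mul_of_pos_right r hpos)

def Encodes (a : ColoredPerm r n) (l f : Fin n → ℕ) : Prop :=
  ∀ i, r * l i = f (a.perm i) + (a.col i).val

/-- The positions of `f`, by decreasing value and increasing position among equal values. -/
def sortPerm (f : Fin n → ℕ) : Equiv.Perm (Fin n) :=
  Tuple.sort (OrderDual.toDual ∘ f)

theorem eq_sortPerm_iff {f : Fin n → ℕ} {σ : Equiv.Perm (Fin n)} :
    σ = sortPerm f ↔ StrictMono fun i => toLex (OrderDual.toDual (f (σ i)), σ i) :=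
  Tuple.eq_sort_iff'

def ofWord (r : ℕ) (f : Fin n → ℕ) : ColoredPerm r n :=
  ⟨sortPerm f, fun i => -(f (sortPerm f i) : ZMod r)⟩

def ofWordSeq (r : ℕ) (f : Fin n → ℕ) : Fin n → ℕ :=
  fun i => (f (sortPerm f i) + ((ofWord r f).col i).val) / r

def word (a : ColoredPerm r n) (l : Fin n → ℕ) : Fin n → ℕ :=
  fun p => r * l (a.perm.symm p) - (a.col (a.perm.symm p)).val

theorem encodes_ofWord [NeZero r] (f : Fin n → ℕ) :
    Encodes (ofWord r f) (ofWordSeq r f) f := by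
  intro i
  refine Nat.mul_div_cancel' ((ZMod.natCast_eq_zero_iff _ _).1 ?_)
  simp [ofWord]

theorem encodes_word {a : ColoredPerm r n} {l : Fin n → ℕ}
    (h : ∀ i, (a.col i).val ≤ r * l i) : Encodes a l (word a l) := by
  intro i
  simp only [word, Equiv.symm_apply_apply]
  exact (Nat.sub_add_cancel (h i)).symm

theorem Encodes.word_eq {a : ColoredPerm r n} {l f : Fin n → ℕ} (h : Encodes a l f) :
    word a l = f := by
  funext p
  simp only [word]
  rw [h, Equiv.apply_symm_apply, Nat.add_sub_cancel]

theorem Encodes.ofWord_eq [NeZero r] {a : ColoredPerm r n} {l f : Fin n → ℕ}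
    (h : Encodes a l f) (hσ : a.perm = sortPerm f) : ofWord r f = a := by
  refine ColoredPerm.ext hσ.symm (funext fun i => ?_)
  have hi := congrArg (Nat.cast : ℕ → ZMod r) (h i)
  simp only [Nat.cast_mul, ZMod.natCast_self, zero_mul, Nat.cast_add, ZMod.natCast_zmod_val] at hi
  simp only [ofWord, ← hσ]
  exact neg_eq_of_add_eq_zero_right hi.symm

theorem Encodes.ofWordSeq_eq [NeZero r] {a : ColoredPerm r n} {l f : Fin n → ℕ}
    (h : Encodes a l f) (hσ : a.perm = sortPerm f) : ofWordSeq r f = l := by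
  funext i
  rw [ofWordSeq, h.ofWord_eq hσ, ← hσ, ← h i, Nat.mul_div_cancel_left _ (NeZero.pos r)]

/-- For two adjacent letters with colours `s, s'`, values `p, p'` and `r l = w + s`,
`r l' = w' + s'`: the compatibility condition is the lexicographic comparison of `(-w, p)` with
`(-w', p')`. -/
theorem compatible_step_iff {α : Type*} [LinearOrder α] {r l l' w w' s s' : ℕ} {p p' : α}
    (hs : s < r) (hs' : s' < r) (hp : p ≠ p') (h : r * l = w + s) (h' : r * l' = w' + s') :
    l' + (if s' < s ∨ s' = s ∧ p' < p then 1 else 0) ≤ l ↔ w' < w ∨ w = w' ∧ p < p' := by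
  have hmul : ∀ {x y : ℕ}, x < y → r * x + r ≤ r * y := fun hxy => by
    simpa [mul_add] using Nat.mul_le_mul_left r (Nat.succ_le_of_lt hxy)
  have := @hmul l l'
  have := @hmul l' l
  have : l = l' → r * l = r * l' := congrArg (r * ·)
  rcases lt_or_gt_of_ne hp with hpp | hpp <;>
    simp only [hpp, hpp.not_gt, and_false, and_true, or_false] <;> split_ifs <;> omega

theorem Encodes.isCompatible_iff [NeZero r] {a : ColoredPerm r n} {l f : Fin n → ℕ}
    (h : Encodes a l f) (j : ℕ) :
    IsCompatible (Des a) j l ↔ (∀ p, f p ≤ r * j) ∧ a.perm = sortPerm f := by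
  have hbound i : l i ≤ j ↔ f (a.perm i) ≤ r * j :=
    Nat.le_iff_le_mul_of_mul_eq_add (ZMod.val_lt _) (h i) j
  have hstep : ∀ (i : Fin n) (hi : i.1 + 1 < n),
      l ⟨i.1 + 1, hi⟩ + (if i ∈ Des a then 1 else 0) ≤ l i ↔
        toLex (OrderDual.toDual (f (a.perm i)), a.perm i) <
          toLex (OrderDual.toDual (f (a.perm ⟨i.1 + 1, hi⟩)), a.perm ⟨i.1 + 1, hi⟩) := by
    intro i hi
    simp only [Prod.Lex.toLex_lt_toLex, OrderDual.toDual_lt_toDual, OrderDual.toDual_inj,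
      mem_Des_of_lt a hi]
    exact compatible_step_iff (ZMod.val_lt _) (ZMod.val_lt _)
      (a.perm.injective.ne (Fin.ne_of_lt (Fin.mk_lt_mk.2 (Nat.lt_succ_self _)))) (h i) (h _)
  rw [IsCompatible, forall_congr' hbound, a.perm.forall_congr_right (q := fun p => f p ≤ r * j),
    eq_sortPerm_iff]
  refine and_congr_right' ⟨fun hc => fun _ _ => Fin.rel_of_lt_of_rel_add_one (· < ·)
    fun i hi => (hstep i hi).1 (nextOrZero_of_lt l hi ▸ hc i), fun hmono i => ?_⟩
  by_cases hi : i.1 + 1 < n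
  · rw [nextOrZero_of_lt l hi]
    exact (hstep i hi).2 (hmono (Fin.mk_lt_mk.2 (Nat.lt_succ_self _)))
  · rw [nextOrZero_of_eq l (by omega), zero_add]
    split_ifs with hd
    · have hi' := h i
      have hc := (ZMod.val_ne_zero _).2 ((mem_Des_of_eq a (by omega)).1 hd)
      refine Nat.pos_of_ne_zero fun h0 => ?_
      rw [h0, mul_zero] at hi'
      omega
    · exact Nat.zero_le _

variable [NeZero r]

theorem sum_card_compatibleSeqs (j : ℕ) :
    ∑ a : ColoredPerm r n, #(compatibleSeqs (Des a) j) = (r * j + 1) ^ n := by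
  have hwords : #(Fintype.piFinset fun _ : Fin n => range (r * j + 1)) = (r * j + 1) ^ n := by
    simp
  rw [← card_sigma, ← hwords]
  refine card_bij' (fun x _ => word x.1 x.2) (fun f _ => ⟨ofWord r f, ofWordSeq r f⟩)
    (fun ⟨a, l⟩ hx => ?_) (fun f hf => ?_) (fun ⟨a, l⟩ hx => ?_) (fun f _ => ?_)
  · have hc := mem_compatibleSeqs.1 (mem_sigma.1 hx).2
    have hbound := (((encodes_word hc.col_val_le_mul).isCompatible_iff j).1 hc).1
    exact Fintype.mem_piFinset.2 fun p => mem_range.2 (Nat.lt_succ_of_le (hbound p))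
  · have hbound p : f p ≤ r * j :=
      Nat.lt_succ_iff.1 (mem_range.1 (Fintype.mem_piFinset.1 hf p))
    exact mem_sigma.2 ⟨mem_univ _,
      mem_compatibleSeqs.2 (((encodes_ofWord f).isCompatible_iff j).2 ⟨hbound, rfl⟩)⟩
  · have hc := mem_compatibleSeqs.1 (mem_sigma.1 hx).2
    have henc := encodes_word hc.col_val_le_mul
    have hσ := ((henc.isCompatible_iff j).1 hc).2
    simp only [henc.ofWord_eq hσ, henc.ofWordSeq_eq hσ]
  · exact (encodes_ofWord f).word_eq

theorem sum_choose_sub_des (j : ℕ) :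
    ∑ a : ColoredPerm r n, (n + j - des a).choose n = (r * j + 1) ^ n := by
  simp only [des, ← card_compatibleSeqs, sum_card_compatibleSeqs]

end ColoredPerm

theorem steingrimsson_eulerian_general (r n : ℕ) [NeZero r] :
    (PowerSeries.mk fun j : ℕ => (((r * j + 1 : ℕ) : ℤ)) ^ n) *
        (1 - PowerSeries.X) ^ (n + 1) =
      ∑ π : ColoredPerm r n, (PowerSeries.X : PowerSeries ℤ) ^ des π := by
  have hseries : (PowerSeries.mk fun j : ℕ => (((r * j + 1 : ℕ) : ℤ)) ^ n) =
      ∑ π : ColoredPerm r n, PowerSeries.mk fun j => (((n + j - des π).choose n : ℕ) : ℤ) := by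
    ext j
    simp only [map_sum, PowerSeries.coeff_mk, ← Nat.cast_pow, ← sum_choose_sub_des, Nat.cast_sum]
  rw [hseries, sum_mul]
  exact sum_congr rfl fun π _ => PowerSeries.mk_choose_sub_mul_one_sub_pow ℤ (des_le π)

/-- Steingrímsson's theorem: `(Σ_{j≥0} (rj+1)^n t^j) · (1−t)^{n+1} = Σ_{π ∈ G_{r,n}} t^{des(π)}`
in `ℤ⟦t⟧`. -/
theorem steingrimsson_eulerian (r n : ℕ) [NeZero r] (hn : 1 ≤ n) :
    (PowerSeries.mk fun j : ℕ => (((r * j + 1 : ℕ) : ℤ)) ^ n) *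
        (1 - PowerSeries.X) ^ (n + 1) =
      ∑ π : ColoredPerm r n, (PowerSeries.X : PowerSeries ℤ) ^ des π :=
  steingrimsson_eulerian_general r n
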